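/- Let SNR > 0, H ∈ ℝ^{N×M}, let (I_M + SNR·Hᵀ·H)⁻¹ = G·Gᵀ be the Cholesky decomposition, and suppose A ∈ ℤ^{M×M} is unimodular and the columns f_1,…,f_M of F = Gᵀ·Aᵀ satisfy the Korkin–Zolotarev shortest-vector conditions: for every i = 1,…,M and every z ∈ ℤ^M with P_i(Gᵀz) ≠ 0, ‖P_i(f_i)‖ ≤ ‖P_i(Gᵀz)‖, where P_i denotes orthogonal projection onto the orthogonal complement of span(f_1,…,f_{i−1}). Then for every full-rank integer matrix Ã ∈ ℤ^{M×M} and every m = 1,…,M, max_{k=1,…,m} ℓ_kk(A)² ≤ max_{k=1,…,m} ℓ_kk(Ã)², where for a full-rank integer matrix B, ℓ_kk(B) denote the diagonal entries of the lower-triangular Cholesky factor of B·(I_M + SNR·Hᵀ·H)⁻¹·Bᵀ. -/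

import Mathlib

/-- View a plain vector in `Fin M → ℝ` as an element of Euclidean space. -/
noncomputable def toE {M : ℕ} (v : Fin M → ℝ) : EuclideanSpace ℝ (Fin M) :=
  (EuclideanSpace.equiv (Fin M) ℝ).symm v

/-- `projPerp f i x` is the orthogonal projection of `x` onto the orthogonal complement of
`span(f_1, …, f_{i-1})`. -/
noncomputable def projPerp {M : ℕ} (f : Fin M → EuclideanSpace ℝ (Fin M)) (i : Fin M)
    (x : EuclideanSpace ℝ (Fin M)) : EuclideanSpace ℝ (Fin M) :=
  (Submodule.orthogonalProjection (Submodule.span ℝ (f '' {j | j < i}))ᗮ x : EuclideanSpace ℝ (Fin M))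

/-!
The diagonal entry `L k k` of a Cholesky factor of the Gram matrix of `f` is the length of
the Gram–Schmidt vector of `f k`, the projection of `f k` onto `(span {f j | j < k})ᗮ`.
Let `k ≤ m` maximise `L k k` and put `f̃ i = Gᵀ ã i` for the rows `ã i` of `Ã`; these are
linearly independent, their Gram matrix being `L̃ L̃ᵀ`. So `f̃ 0, …, f̃ k` cannot all lie in the
`k`-dimensional space `V = span {f j | j < k}`; let `f̃ j` be the first one outside `V`.
The KZ condition gives `L k k ≤ ‖P_{Vᗮ} f̃ j‖`, and as `W = span {f̃ i | i < j}` lies in `V`,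
`‖P_{Vᗮ} f̃ j‖ ≤ ‖P_{Wᗮ} f̃ j‖ = L̃ j j` with `j ≤ m`.
-/

open scoped RealInnerProductSpace
open Matrix Submodule

namespace Matrix

variable {R M ι κ ν : Type*}

section Combination

variable [Semiring R] [AddCommMonoid M] [Module R M]

def combination [Fintype ι] (B : Matrix κ ι R) (f : ι → M) : κ → M :=
  fun k => ∑ i, B k i • f i

theorem combination_mul [Fintype ι] [Fintype ν] (B : Matrix κ ι R) (C : Matrix ι ν R)
    (f : ν → M) : combination (B * C) f = combination B (combination C f) := by
  ext k
  simp only [combination, mul_apply, Finset.sum_smul, Finset.smul_sum, smul_smul]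
  exact Finset.sum_comm

@[simp]
theorem combination_one [Fintype ι] [DecidableEq ι] (f : ι → M) :
    combination (1 : Matrix ι ι R) f = f := by
  ext k
  simp [combination, one_apply]

theorem span_image_Iio_combination_le [Fintype ι] [LinearOrder ι] {B : Matrix ι ι R}
    (hB : B.IsLowerTriangular) (f : ι → M) (k : ι) :
    span R (combination B f '' Set.Iio k) ≤ span R (f '' Set.Iio k) := by
  refine span_le.2 ?_
  rintro _ ⟨j, hjk : j < k, rfl⟩
  refine sum_mem fun t _ => ?_
  rcases lt_or_ge j t with hjt | htj
  · simp [hB hjt]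
  · exact smul_mem _ _ (subset_span ⟨t, htj.trans_lt hjk, rfl⟩)

end Combination

theorem gram_combination [Fintype ι] {E : Type*} [NormedAddCommGroup E]
    [InnerProductSpace ℝ E] (B : Matrix κ ι ℝ) (f : ι → E) :
    gram ℝ (combination B f) = B * gram ℝ f * Bᵀ := by
  ext k l
  simp only [gram_apply, combination, sum_inner, inner_sum, real_inner_smul_left,
    real_inner_smul_right, mul_apply, transpose_apply, Finset.sum_mul]
  exact Finset.sum_congr rfl fun _ _ => Finset.sum_congr rfl fun _ _ => by ring

theorem IsLowerTriangular.det_pos [Fintype ι] [LinearOrder ι] {L : Matrix ι ι ℝ}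
    (hL : L.IsLowerTriangular) (hdiag : ∀ i, 0 < L i i) : 0 < L.det := by
  rw [det_of_isLowerTriangular L hL]
  exact Finset.prod_pos fun i _ => hdiag i

end Matrix

section Counting

variable {K V ι : Type*} [DivisionRing K] [AddCommGroup V] [Module K V]
  [LinearOrder ι] [LocallyFiniteOrderBot ι]

theorem LinearIndependent.exists_le_notMem_span_image_Iio {g : ι → V}
    (hg : LinearIndependent K g) (f : ι → V) (k : ι) :
    ∃ j ≤ k, g j ∉ span K (f '' Set.Iio k) := by
  classical
  by_contra! hall
  have hcard := linearIndependent_le_span_aux' (fun i : Finset.Iic k => g i)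
    (hg.comp _ Subtype.val_injective) ((Finset.Iio k).image f) <| by
      rw [Finset.coe_image, Finset.coe_Iio]
      exact Set.range_subset_iff.2 fun i => hall i (Finset.mem_Iic.1 i.2)
  have hlt : (Finset.Iio k).card < (Finset.Iic k).card :=
    Finset.card_lt_card <| (Finset.ssubset_iff_of_subset Finset.Iio_subset_Iic_self).2
      ⟨k, Finset.mem_Iic.2 le_rfl, by simp⟩
  simp only [Finset.coe_sort_coe, Fintype.card_coe] at hcard
  exact (hcard.trans Finset.card_image_le).not_gt hlt

theorem LinearIndependent.exists_minimal_notMem_span_image_Iio {g : ι → V}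
    (hg : LinearIndependent K g) (f : ι → V) (k : ι) :
    ∃ j ≤ k, g j ∉ span K (f '' Set.Iio k) ∧ ∀ i < j, g i ∈ span K (f '' Set.Iio k) := by
  classical
  obtain ⟨j₀, hj₀k, hj₀⟩ := hg.exists_le_notMem_span_image_Iio f k
  set s := (Finset.Iic k).filter fun j => g j ∉ span K (f '' Set.Iio k)
  have hs : s.Nonempty := ⟨j₀, by simp [s, hj₀k, hj₀]⟩
  obtain ⟨hjk, hj⟩ : s.min' hs ≤ k ∧ g (s.min' hs) ∉ span K (f '' Set.Iio k) := by
    simpa [s] using s.min'_mem hs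
  refine ⟨s.min' hs, hjk, hj, fun i hij => by_contra fun hi => ?_⟩
  exact (s.min'_le i (by simp [s, hij.le.trans hjk, hi])).not_gt hij

end Counting

section InnerProductSpace

variable {ι E : Type*} [NormedAddCommGroup E] [InnerProductSpace ℝ E]

theorem linearIndependent_of_gram_eq_mul_transpose [Fintype ι] [DecidableEq ι] {f : ι → E}
    {L : Matrix ι ι ℝ} (hL : L.det ≠ 0) (hgram : gram ℝ f = L * Lᵀ) : LinearIndependent ℝ f :=
  linearIndependent_of_det_gram_ne_zero <| by
    rw [hgram, det_mul, det_transpose]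
    exact mul_ne_zero hL hL

theorem norm_starProjection_orthogonal_le_of_le {𝕜 F : Type*} [RCLike 𝕜]
    [NormedAddCommGroup F] [InnerProductSpace 𝕜 F] {U V : Submodule 𝕜 F} [U.HasOrthogonalProjection]
    [V.HasOrthogonalProjection] (hUV : U ≤ V) (x : F) :
    ‖Vᗮ.starProjection x‖ ≤ ‖Uᗮ.starProjection x‖ := by
  have h : Vᗮ.starProjection (Uᗮ.starProjection x) = Vᗮ.starProjection x :=
    congrArg Subtype.val (orthogonalProjectionOnto_starProjection_of_le (orthogonal_le hUV) x)
  exact h ▸ norm_starProjection_apply_le _ _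

theorem norm_starProjection_orthogonal_span_Iio_of_gram_eq [Fintype ι] [LinearOrder ι]
    [FiniteDimensional ℝ E] {f : ι → E} {L : Matrix ι ι ℝ} (hL : L.IsLowerTriangular)
    (hdiag : ∀ i, 0 < L i i) (hgram : gram ℝ f = L * Lᵀ) (k : ι) :
    ‖(span ℝ (f '' Set.Iio k))ᗮ.starProjection (f k)‖ = L k k := by
  -- `u = L⁻¹ f` is an orthonormal basis of the same flag as `f`, and `f k = ∑ t, L k t • u t`.
  have hdet : IsUnit L.det := (hL.det_pos hdiag).ne'.isUnit
  have : Invertible L := L.invertibleOfIsUnitDet hdet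
  set u := combination L⁻¹ f
  have hu : Orthonormal ℝ u := by
    rw [← gram_eq_one_iff_orthonormal, gram_combination, hgram, transpose_nonsing_inv,
      ← Matrix.mul_assoc, nonsing_inv_mul L hdet, Matrix.one_mul,
      mul_nonsing_inv _ (by rwa [det_transpose])]
  have hfu : f = combination L u := by
    rw [← combination_mul, mul_nonsing_inv L hdet, combination_one]
  have hspan : span ℝ (f '' Set.Iio k) = span ℝ (u '' Set.Iio k) := by
    refine le_antisymm ?_
      (span_image_Iio_combination_le (blockTriangular_inv_of_blockTriangular hL) f k)
    conv_lhs => rw [hfu]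
    exact span_image_Iio_combination_le hL u k
  have huk : u k ∈ (span ℝ (u '' Set.Iio k))ᗮ :=
    (isOrtho_span.2 <| by
      rintro _ ⟨t, ht : t < k, rfl⟩ _ rfl
      exact hu.inner_eq_zero ht.ne).ge (mem_span_singleton_self (u k))
  have hproj : (span ℝ (u '' Set.Iio k))ᗮ.starProjection (f k) = L k k • u k := by
    rw [hfu]
    simp only [combination, map_sum, map_smul]
    refine (Finset.sum_eq_single k (fun t _ htk => ?_) (by simp)).trans ?_
    · rcases htk.lt_or_gt with htk | hkt
      · have hut : u t ∈ span ℝ (u '' Set.Iio k) := subset_span ⟨t, htk, rfl⟩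
        rw [starProjection_orthogonal_apply_eq_zero hut, smul_zero]
      · rw [hL hkt, zero_smul]
    · rw [starProjection_eq_self_iff.2 huk]
  rw [hspan, hproj, norm_smul, hu.1 k, mul_one, Real.norm_of_nonneg (hdiag k).le]

end InnerProductSpace

theorem gram_toE_transpose_mulVec {ι : Type*} {M : ℕ} (G : Matrix (Fin M) (Fin M) ℝ)
    (B : Matrix ι (Fin M) ℝ) :
    gram ℝ (fun i => toE (Gᵀ *ᵥ B i)) = B * (G * Gᵀ) * Bᵀ := by
  rw [show B * (G * Gᵀ) * Bᵀ = B * G * (B * G)ᵀ by simp [Matrix.mul_assoc, transpose_mul]]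
  ext i j
  simp [toE, EuclideanSpace.inner_eq_star_dotProduct, mulVec_transpose, mul_apply, dotProduct,
    vecMul, mul_comm]

theorem kz_shortest_vector_partial_max_optimality_general {M N : ℕ}
    (SNR : ℝ)
    (H : Matrix (Fin N) (Fin M) ℝ)
    (G : Matrix (Fin M) (Fin M) ℝ)
    (hGchol : ((1 : Matrix (Fin M) (Fin M) ℝ) + SNR • (H.transpose * H))⁻¹ = G * G.transpose)
    (A : Matrix (Fin M) (Fin M) ℤ)
    -- f_i are the columns of F = Gᵀ Aᵀ, i.e. f_i = Gᵀ a_i with a_iᵀ the i-th row of A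
    (f : Fin M → EuclideanSpace ℝ (Fin M))
    (hf : ∀ i, f i = toE ((G.transpose).mulVec (fun t => ((A i t : ℤ) : ℝ))))
    -- the KZ shortest-vector conditions
    (hKZ1 : ∀ (i : Fin M) (z : Fin M → ℤ),
      projPerp f i (toE ((G.transpose).mulVec (fun t => (z t : ℝ)))) ≠ 0 →
      ‖projPerp f i (f i)‖ ≤ ‖projPerp f i (toE ((G.transpose).mulVec (fun t => (z t : ℝ))))‖)
    -- L is the Cholesky factor associated with A
    (L : Matrix (Fin M) (Fin M) ℝ)
    (hLtri : ∀ a b : Fin M, a < b → L a b = 0)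
    (hLdiag : ∀ a : Fin M, 0 < L a a)
    (hLchol : (A.map (Int.cast : ℤ → ℝ))
        * ((1 : Matrix (Fin M) (Fin M) ℝ) + SNR • (H.transpose * H))⁻¹
        * (A.map (Int.cast : ℤ → ℝ)).transpose = L * L.transpose) :
    ∀ (Atil : Matrix (Fin M) (Fin M) ℤ), Atil.det ≠ 0 →
    ∀ (Ltil : Matrix (Fin M) (Fin M) ℝ),
      (∀ a b : Fin M, a < b → Ltil a b = 0) →
      (∀ a : Fin M, 0 < Ltil a a) →
      (Atil.map (Int.cast : ℤ → ℝ))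
          * ((1 : Matrix (Fin M) (Fin M) ℝ) + SNR • (H.transpose * H))⁻¹
          * (Atil.map (Int.cast : ℤ → ℝ)).transpose = Ltil * Ltil.transpose →
    ∀ m : Fin M,
      (Finset.Iic m).sup' ⟨m, Finset.mem_Iic.mpr le_rfl⟩ (fun k => (L k k)^2)
        ≤ (Finset.Iic m).sup' ⟨m, Finset.mem_Iic.mpr le_rfl⟩ (fun k => (Ltil k k)^2) := by
  intro Atil _ Ltil hLtiltri hLtildiag hLtilchol m
  set ftil : Fin M → EuclideanSpace ℝ (Fin M) := fun i => toE (Gᵀ *ᵥ fun t => (Atil i t : ℝ))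
  have hgram : gram ℝ f = L * Lᵀ := by
    rw [funext hf, ← hLchol, hGchol]
    exact gram_toE_transpose_mulVec G (A.map Int.cast)
  have hgramtil : gram ℝ ftil = Ltil * Ltilᵀ := by
    rw [← hLtilchol, hGchol]
    exact gram_toE_transpose_mulVec G (Atil.map Int.cast)
  obtain ⟨k, hkm, hk⟩ :=
    Finset.exists_mem_eq_sup' ⟨m, Finset.mem_Iic.mpr le_rfl⟩ fun k => L k k ^ 2
  have hftil : LinearIndependent ℝ ftil := linearIndependent_of_gram_eq_mul_transpose
    (IsLowerTriangular.det_pos hLtiltri hLtildiag).ne' hgramtil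
  obtain ⟨j, hjk, hjV, hjmin⟩ := hftil.exists_minimal_notMem_span_image_Iio f k
  have hproj_ne : projPerp f k (ftil j) ≠ 0 := by
    change (span ℝ (f '' Set.Iio k))ᗮ.starProjection (ftil j) ≠ 0
    rw [starProjection_orthogonal_val, sub_ne_zero]
    exact fun h => hjV (starProjection_eq_self_iff.1 h.symm)
  have hLkj : L k k ≤ Ltil j j := calc
    L k k = ‖projPerp f k (f k)‖ :=
      (norm_starProjection_orthogonal_span_Iio_of_gram_eq hLtri hLdiag hgram k).symm
    _ ≤ ‖projPerp f k (ftil j)‖ := hKZ1 k (Atil j) hproj_ne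
    _ ≤ ‖(span ℝ (ftil '' Set.Iio j))ᗮ.starProjection (ftil j)‖ :=
      norm_starProjection_orthogonal_le_of_le
        (span_le.2 (by rintro _ ⟨i, hi, rfl⟩; exact hjmin i hi)) _
    _ = Ltil j j :=
      norm_starProjection_orthogonal_span_Iio_of_gram_eq hLtiltri hLtildiag hgramtil j
  rw [hk]
  exact (pow_le_pow_left₀ (hLdiag k).le hLkj 2).trans
    (Finset.le_sup' (fun k => Ltil k k ^ 2) (Finset.mem_Iic.2 (hjk.trans (Finset.mem_Iic.1 hkm))))

theorem kz_shortest_vector_partial_max_optimality {M N : ℕ}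
    (SNR : ℝ) (hSNR : 0 < SNR)
    (H : Matrix (Fin N) (Fin M) ℝ)
    (G : Matrix (Fin M) (Fin M) ℝ)
    (hGtri : ∀ i j : Fin M, i < j → G i j = 0)
    (hGdiag : ∀ i : Fin M, 0 < G i i)
    (hGchol : ((1 : Matrix (Fin M) (Fin M) ℝ) + SNR • (H.transpose * H))⁻¹ = G * G.transpose)
    -- A is unimodular
    (A : Matrix (Fin M) (Fin M) ℤ) (hA : A.det = 1 ∨ A.det = -1)
    -- f_i are the columns of F = Gᵀ Aᵀ, i.e. f_i = Gᵀ a_i with a_iᵀ the i-th row of A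
    (f : Fin M → EuclideanSpace ℝ (Fin M))
    (hf : ∀ i, f i = toE ((G.transpose).mulVec (fun t => ((A i t : ℤ) : ℝ))))
    -- the KZ shortest-vector conditions
    (hKZ1 : ∀ (i : Fin M) (z : Fin M → ℤ),
      projPerp f i (toE ((G.transpose).mulVec (fun t => (z t : ℝ)))) ≠ 0 →
      ‖projPerp f i (f i)‖ ≤ ‖projPerp f i (toE ((G.transpose).mulVec (fun t => (z t : ℝ))))‖)
    -- L is the Cholesky factor associated with A
    (L : Matrix (Fin M) (Fin M) ℝ)
    (hLtri : ∀ a b : Fin M, a < b → L a b = 0)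
    (hLdiag : ∀ a : Fin M, 0 < L a a)
    (hLchol : (A.map (Int.cast : ℤ → ℝ))
        * ((1 : Matrix (Fin M) (Fin M) ℝ) + SNR • (H.transpose * H))⁻¹
        * (A.map (Int.cast : ℤ → ℝ)).transpose = L * L.transpose) :
    ∀ (Atil : Matrix (Fin M) (Fin M) ℤ), Atil.det ≠ 0 →
    ∀ (Ltil : Matrix (Fin M) (Fin M) ℝ),
      (∀ a b : Fin M, a < b → Ltil a b = 0) →
      (∀ a : Fin M, 0 < Ltil a a) →
      (Atil.map (Int.cast : ℤ → ℝ))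
          * ((1 : Matrix (Fin M) (Fin M) ℝ) + SNR • (H.transpose * H))⁻¹
          * (Atil.map (Int.cast : ℤ → ℝ)).transpose = Ltil * Ltil.transpose →
    ∀ m : Fin M,
      (Finset.Iic m).sup' ⟨m, Finset.mem_Iic.mpr le_rfl⟩ (fun k => (L k k)^2)
        ≤ (Finset.Iic m).sup' ⟨m, Finset.mem_Iic.mpr le_rfl⟩ (fun k => (Ltil k k)^2) :=
  kz_shortest_vector_partial_max_optimality_general SNR H G hGchol A f hf hKZ1 L hLtri hLdiag hLchol
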